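/- arXiv:1910.08541 — 3 statements merged into one kernel-verified Lean document; each statement's English description precedes it below -/
import Mathlib

section
/- Let β : Fin K → EuclideanSpace ℂ (Fin N) be an orthonormal family, let g : Fin K → Fin M → ℂ, and let p > 0. Then p · ∑_{k} (∑_{m} |g_{k,m}|)² is the greatest element of the set of values |∑_{k} (∑_{m} exp(i θ_{k,m}) · g_{k,m}) · ⟪β_k, w⟫|² as θ ranges over all phase configurations θ : Fin K → Fin M → ℝ and w ranges over vectors in EuclideanSpace ℂ (Fin N) with ‖w‖² ≤ p. -/
/-!
Phase shifts only rotate the summands of each effective channel `∑ m, exp (i θ k m) * g k m`,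
so its modulus is at most `∑ m, ‖g k m‖`, with equality for `θ k m = -arg (g k m)`.
For an orthonormal family, `∑ k, a k * ⟪β k, w⟫ = ⟪∑ k, conj (a k) • β k, w⟫` and
`‖∑ k, conj (a k) • β k‖² = ∑ k, ‖a k‖²`, so Cauchy–Schwarz bounds the received power by
`(∑ k, ‖a k‖²) * ‖w‖²`, with equality for `w` a multiple of `∑ k, conj (a k) • β k`.
-/

open Complex Finset

section Orthonormal

variable {ι 𝕜 E : Type*} [Fintype ι] [RCLike 𝕜] [NormedAddCommGroup E] [InnerProductSpace 𝕜 E]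
  {β : ι → E}

theorem Orthonormal.norm_sum_smul_sq (hβ : Orthonormal 𝕜 β) (l : ι → 𝕜) :
    ‖∑ k, l k • β k‖ ^ 2 = ∑ k, ‖l k‖ ^ 2 := by
  rw [← RCLike.ofReal_inj (K := 𝕜), RCLike.ofReal_pow, ← inner_self_eq_norm_sq_to_K,
    hβ.inner_sum]
  push_cast
  simp only [RCLike.conj_mul]

theorem Orthonormal.norm_sum_mul_inner_sq_le (hβ : Orthonormal 𝕜 β) (a : ι → 𝕜) (w : E) :
    ‖∑ k, a k * inner 𝕜 (β k) w‖ ^ 2 ≤ (∑ k, ‖a k‖ ^ 2) * ‖w‖ ^ 2 := by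
  have hsum : ∑ k, a k * inner 𝕜 (β k) w = inner 𝕜 (∑ k, (starRingEnd 𝕜) (a k) • β k) w := by
    simp [sum_inner, inner_smul_left]
  calc ‖∑ k, a k * inner 𝕜 (β k) w‖ ^ 2
      ≤ (‖∑ k, (starRingEnd 𝕜) (a k) • β k‖ * ‖w‖) ^ 2 := by
        rw [hsum]; gcongr; exact norm_inner_le_norm _ _
    _ = (∑ k, ‖a k‖ ^ 2) * ‖w‖ ^ 2 := by
        rw [mul_pow, hβ.norm_sum_smul_sq]; simp only [RCLike.norm_conj]

theorem Orthonormal.exists_norm_sum_mul_inner_sq_eq (hβ : Orthonormal 𝕜 β) (a : ι → 𝕜) {p : ℝ}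
    (hp : 0 ≤ p) :
    ∃ w : E, ‖w‖ ^ 2 ≤ p ∧ ‖∑ k, a k * inner 𝕜 (β k) w‖ ^ 2 = (∑ k, ‖a k‖ ^ 2) * p := by
  set S := ∑ k, ‖a k‖ ^ 2
  have hS : 0 ≤ S := sum_nonneg fun k _ => sq_nonneg _
  have hpS : 0 ≤ p / S := div_nonneg hp hS
  refine ⟨(√(p / S) : 𝕜) • ∑ k, (starRingEnd 𝕜) (a k) • β k, ?_, ?_⟩
  · rw [norm_smul, mul_pow, hβ.norm_sum_smul_sq]
    simp only [RCLike.norm_ofReal, sq_abs, RCLike.norm_conj]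
    rw [Real.sq_sqrt hpS]
    -- `p / 0 = 0` makes `w = 0` when all weights vanish
    rcases hS.eq_or_lt with hS | hS
    · simp [← hS, hp]
    · rw [div_mul_cancel₀ _ hS.ne']
  · have hsum : ∑ k, a k * inner 𝕜 (β k) ((√(p / S) : 𝕜) • ∑ k, (starRingEnd 𝕜) (a k) • β k)
        = ((√(p / S) * S : ℝ) : 𝕜) := by
      simp only [inner_smul_right, hβ.inner_right_fintype, mul_left_comm (a _), RCLike.mul_conj,
        ← mul_sum, S]
      push_cast
      rfl
    rw [hsum, RCLike.norm_ofReal, sq_abs, mul_pow, Real.sq_sqrt hpS]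
    rcases hS.eq_or_lt with hS | hS
    · simp [← hS]
    · field_simp

end Orthonormal

namespace Complex

variable {ι : Type*} [Fintype ι]

theorem norm_sum_exp_mul_I_mul_le (θ : ι → ℝ) (g : ι → ℂ) :
    ‖∑ m, exp (θ m * I) * g m‖ ≤ ∑ m, ‖g m‖ :=
  (norm_sum_le _ _).trans_eq <| by simp only [norm_mul, norm_exp_ofReal_mul_I, one_mul]

theorem exp_neg_arg_mul_I_mul_self (z : ℂ) : exp (↑(-z.arg) * I) * z = ‖z‖ := by
  rw [ofReal_neg, neg_mul, exp_neg, inv_mul_eq_iff_eq_mul₀ (exp_ne_zero _), mul_comm,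
    norm_mul_exp_arg_mul_I]

end Complex

/-- Main deterministic joint beamforming result: for `K` IRSs with orthonormal
base-station steering vectors `β k` and cascaded channels `g k`, the maximal receive
power over continuous phase shifts `θ` and beamformers `w` with `‖w‖² ≤ p` equals
`p * ∑ k, (∑ m, |g k m|)²`. -/
theorem joint_beamforming_optimal_value (K N M : ℕ)
    (β : Fin K → EuclideanSpace ℂ (Fin N)) (hβ : Orthonormal ℂ β)
    (g : Fin K → Fin M → ℂ) (p : ℝ) (hp : 0 < p) :
    IsGreatest
      {x : ℝ | ∃ θ : Fin K → Fin M → ℝ, ∃ w : EuclideanSpace ℂ (Fin N),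
        ‖w‖ ^ 2 ≤ p ∧
        x = ‖∑ k,
              (∑ m, Complex.exp ((θ k m : ℂ) * Complex.I) * g k m)
                * (inner ℂ (β k) w : ℂ)‖ ^ 2}
      (p * ∑ k, (∑ m, ‖g k m‖) ^ 2) := by
  refine ⟨?_, ?_⟩
  · obtain ⟨w, hw, hval⟩ := hβ.exists_norm_sum_mul_inner_sq_eq (fun k => (∑ m, ‖g k m‖ : ℂ)) hp.le
    refine ⟨fun k m => -(g k m).arg, w, hw, ?_⟩
    simp only [exp_neg_arg_mul_I_mul_self, hval]
    rw [mul_comm]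
    congr! 3 with k
    rw [← ofReal_sum, norm_real, Real.norm_of_nonneg (sum_nonneg fun m _ => norm_nonneg _)]
  · rintro x ⟨θ, w, hw, rfl⟩
    calc _ ≤ (∑ k, ‖∑ m, exp (θ k m * I) * g k m‖ ^ 2) * ‖w‖ ^ 2 :=
          hβ.norm_sum_mul_inner_sq_le _ w
      _ ≤ (∑ k, (∑ m, ‖g k m‖) ^ 2) * p := by
          gcongr with k
          exact norm_sum_exp_mul_I_mul_le _ _
      _ = p * ∑ k, (∑ m, ‖g k m‖) ^ 2 := mul_comm _ _
end

section
/- Let δ > 0 and let c : Fin M → ℝ. Let μ be the product measure on (Fin M → ℝ) whose factors are the uniform probability measure on [−δ, δ]. Then ∫ |∑_{m} c_m · exp(i Δ_m)|² dμ(Δ) = ∑_{m} c_m² + (sin δ / δ)² · ∑_{m} ∑_{i ≠ m} c_m · c_i. -/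
/-!
Expand `‖∑ c m e^{iΔ m}‖² = ∑ m, ∑ i, c m c i e^{iΔ m} conj (e^{iΔ i})` and integrate term by term.
Diagonal terms are `1`; since the coordinates are independent under the product measure, each
off-diagonal term is `φ · conj φ = ‖φ‖²`, where `φ` is the characteristic function of the phase
law at `1`. For the uniform law on `[-δ, δ]`, `φ = sin δ / δ`.
-/

open Real Complex Finset MeasureTheory ProbabilityTheory ComplexConjugate

lemma integral_comp_eval_mul_comp_eval {ι 𝕜 : Type*} [Fintype ι] [RCLike 𝕜] {X : ι → Type*}
    [∀ i, MeasurableSpace (X i)] {μ : ∀ i, Measure (X i)} [∀ i, IsProbabilityMeasure (μ i)]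
    {i j : ι} (hij : i ≠ j) {f : X i → 𝕜} {g : X j → 𝕜}
    (hf : AEStronglyMeasurable f (μ i)) (hg : AEStronglyMeasurable g (μ j)) :
    ∫ x, f (x i) * g (x j) ∂Measure.pi μ = (∫ y, f y ∂μ i) * ∫ y, g y ∂μ j := by
  have hind : IndepFun (fun x => x i) (fun x => x j) (Measure.pi μ) :=
    (iIndepFun_pi (X := fun _ => id) fun _ => aemeasurable_id).indepFun hij
  rw [hind.integral_fun_comp_mul_comp (measurable_pi_apply i).aemeasurable
      (measurable_pi_apply j).aemeasurable (by rwa [(measurePreserving_eval μ i).map_eq])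
      (by rwa [(measurePreserving_eval μ j).map_eq]),
    integral_comp_eval hf, integral_comp_eval hg]

lemma ofReal_norm_sum_ofReal_mul_sq {ι : Type*} [Fintype ι] (c : ι → ℝ) (w : ι → ℂ) :
    ((‖∑ m, (c m : ℂ) * w m‖ ^ 2 : ℝ) : ℂ)
      = ∑ m, ∑ i, ((c m * c i : ℝ) : ℂ) * (w m * conj (w i)) := by
  rw [ofReal_pow, ← mul_conj', map_sum, sum_mul_sum]
  refine sum_congr rfl fun m _ => sum_congr rfl fun i _ => ?_
  simp only [map_mul, conj_ofReal, ofReal_mul]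
  ring

lemma sum_sum_mul_ite_eq {R ι : Type*} [CommRing R] [Fintype ι] [DecidableEq ι]
    (a : ι → ι → R) (t : R) :
    ∑ m, ∑ i, a m i * (if m = i then 1 else t)
      = ∑ m, a m m + t * ∑ m, ∑ i ∈ univ.erase m, a m i := by
  rw [mul_sum, ← sum_add_distrib]
  refine sum_congr rfl fun m _ => ?_
  rw [← add_sum_erase _ _ (mem_univ m), if_pos rfl, mul_one, mul_sum]
  congr 1
  refine sum_congr rfl fun i hi => ?_
  rw [if_neg (ne_of_mem_erase hi).symm, mul_comm]

lemma integral_exp_mul_I_mul_conj_pi {ι : Type*} [Fintype ι] [DecidableEq ι] (μ : Measure ℝ)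
    [IsProbabilityMeasure μ] (m i : ι) :
    ∫ Δ, exp (Δ m * I) * conj (exp (Δ i * I)) ∂Measure.pi (fun _ => μ)
      = if m = i then 1 else ((‖charFun μ 1‖ ^ 2 : ℝ) : ℂ) := by
  split_ifs with hmi
  · subst hmi
    simp [mul_conj', norm_exp_ofReal_mul_I]
  · have hexp : Continuous fun x : ℝ => exp (x * I) := by fun_prop
    rw [integral_comp_eval_mul_comp_eval (X := fun _ => ℝ) (μ := fun _ => μ)
        (f := fun x => exp (x * I)) (g := fun x => conj (exp (x * I))) hmi
        hexp.aestronglyMeasurable (continuous_conj.comp hexp).aestronglyMeasurable,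
      integral_conj, ofReal_pow, ← mul_conj', charFun_apply_real]
    simp only [ofReal_one, one_mul]

theorem integral_norm_sq_sum_mul_exp_pi {ι : Type*} [Fintype ι] [DecidableEq ι] (μ : Measure ℝ)
    [IsProbabilityMeasure μ] (c : ι → ℝ) :
    ∫ Δ, ‖∑ m, (c m : ℂ) * exp (Δ m * I)‖ ^ 2 ∂Measure.pi (fun _ => μ)
      = ∑ m, c m ^ 2 + ‖charFun μ 1‖ ^ 2 * ∑ m, ∑ i ∈ univ.erase m, c m * c i := by
  have hint (m i : ι) :
      Integrable (fun Δ : ι → ℝ => exp (Δ m * I) * conj (exp (Δ i * I)))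
        (Measure.pi fun _ => μ) := by
    refine .of_bound (by fun_prop) 1 (.of_forall fun Δ => ?_)
    simp [norm_exp_ofReal_mul_I]
  apply ofReal_injective
  rw [← integral_complex_ofReal]
  simp_rw [ofReal_norm_sum_ofReal_mul_sq]
  rw [integral_finsetSum _ fun m _ => integrable_finsetSum _ fun i _ => (hint m i).const_mul _]
  simp_rw [integral_finsetSum _ fun i _ => (hint _ i).const_mul _, integral_const_mul,
    integral_exp_mul_I_mul_conj_pi, sum_sum_mul_ite_eq]
  simp only [ofReal_add, ofReal_mul, ofReal_sum, sq]

theorem charFun_cond_volume_Icc_neg {δ t : ℝ} (hδ : 0 < δ) (ht : t ≠ 0) :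
    charFun (volume[|Set.Icc (-δ) δ]) t = (Real.sin (t * δ) / (t * δ) : ℝ) := by
  have htI : (t : ℂ) * I ≠ 0 := mul_ne_zero (ofReal_ne_zero.2 ht) I_ne_zero
  rw [charFun_apply_real, ProbabilityTheory.cond, integral_smul_measure,
    integral_Icc_eq_integral_Ioc, ← intervalIntegral.integral_of_le (by linarith), Real.volume_Icc]
  simp_rw [show ∀ x : ℝ, (t : ℂ) * x * I = (t * I) * x from fun x => by ring]
  rw [integral_exp_mul_complex htI, ENNReal.toReal_inv, ENNReal.toReal_ofReal (by linarith),
    Complex.real_smul]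
  have hdiff : exp (t * I * δ) - exp (t * I * -δ) = 2 * Complex.sin (t * δ) * I := by
    rw [show (t : ℂ) * I * δ = (t * δ) * I by ring, show (t : ℂ) * I * -δ = -(t * δ) * I by ring,
      exp_mul_I, exp_mul_I, Complex.cos_neg, Complex.sin_neg]
    ring
  push_cast
  rw [hdiff]
  field_simp
  ring

/-- Expected receive power with independent uniform phase errors: for `Δ_m` i.i.d.
uniform on `[-δ, δ]` and real magnitudes `c_m`,
`E |∑ m, c m · exp(i Δ m)|² = ∑ m, c m ² + (sin δ / δ)² · ∑_{m} ∑_{i ≠ m} c m · c i`. -/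
theorem expected_power_uniform_phase_errors (M : ℕ) (δ : ℝ) (hδ : 0 < δ)
    (c : Fin M → ℝ) :
    (∫ Δ : Fin M → ℝ,
        ‖∑ m, (c m : ℂ) * Complex.exp ((Δ m : ℂ) * Complex.I)‖ ^ 2
      ∂(Measure.pi fun _ : Fin M =>
          (ENNReal.ofReal (2 * δ))⁻¹ • volume.restrict (Set.Icc (-δ) δ)))
      = ∑ m, c m ^ 2
        + (Real.sin δ / δ) ^ 2 * ∑ m, ∑ i ∈ Finset.univ.erase m, c m * c i := by
  have hvol : volume (Set.Icc (-δ) δ) = ENNReal.ofReal (2 * δ) := by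
    rw [Real.volume_Icc, sub_neg_eq_add, two_mul]
  have : IsProbabilityMeasure (volume[|Set.Icc (-δ) δ]) :=
    cond_isProbabilityMeasure_of_finite (by simp [hvol, hδ]) (hvol ▸ ENNReal.ofReal_ne_top)
  rw [← hvol, ← ProbabilityTheory.cond, integral_norm_sq_sum_mul_exp_pi,
    charFun_cond_volume_Icc_neg hδ one_ne_zero, one_mul, norm_real, Real.norm_eq_abs, sq_abs]
end

section
/- Fix a natural number b and set δ = π/2^b. For each M, let μ_M be the product measure on (Fin M → ℝ) whose factors are the uniform probability measure on [−δ, δ]. Then (1/M²) · ∫ |∑_{m} exp(i Δ_m)|² dμ_M(Δ) tends to ((2^b/π) · sin(π/2^b))² as M → ∞. In particular the expected power ∫ |∑_{m} exp(i Δ_m)|² dμ_M grows quadratically in M. -/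
/-! Expanding the square, `‖∑ m, exp (Δ m * I)‖² = ∑ m n, exp (Δ m * I) * conj (exp (Δ n * I))`.
The `M` diagonal terms equal `1`, and by independence of the coordinates each of the `M² - M`
off-diagonal terms has expectation `‖φ 1‖²`, where `φ` is the characteristic function of one
phase error. So the expected power is exactly `M + (M² - M) ‖φ 1‖²`, and for the uniform law on
`[-δ, δ]` one has `φ 1 = sin δ / δ`. -/

open Real Complex Finset MeasureTheory Filter ProbabilityTheory ComplexConjugate

lemma integral_pi_comp_eval_mul_comp_eval {Ω ι 𝕜 : Type*} [MeasurableSpace Ω] [Fintype ι]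
    [RCLike 𝕜] (μ : Measure Ω) [IsProbabilityMeasure μ] {i j : ι} (hij : i ≠ j) {f g : Ω → 𝕜}
    (hf : Measurable f) (hg : Measurable g) :
    ∫ ω : ι → Ω, f (ω i) * g (ω j) ∂Measure.pi (fun _ => μ) = (∫ x, f x ∂μ) * ∫ x, g x ∂μ := by
  have hindep : (fun ω : ι → Ω => f (ω i)) ⟂ᵢ[Measure.pi fun _ => μ] fun ω => g (ω j) :=
    ((iIndepFun_pi (X := fun _ => id) fun _ => aemeasurable_id).indepFun hij).comp hf hg
  rw [hindep.integral_fun_mul_eq_mul_integral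
      (hf.comp (measurable_pi_apply i)).aestronglyMeasurable
      (hg.comp (measurable_pi_apply j)).aestronglyMeasurable,
    integral_comp_eval hf.aestronglyMeasurable, integral_comp_eval hg.aestronglyMeasurable]

lemma integral_pi_exp_mul_I_mul_conj {ι : Type*} [Fintype ι] [DecidableEq ι] (μ : Measure ℝ)
    [IsProbabilityMeasure μ] (i j : ι) :
    ∫ Δ : ι → ℝ, exp (Δ i * I) * conj (exp (Δ j * I)) ∂Measure.pi (fun _ => μ)
      = if i = j then 1 else (‖charFun μ 1‖ : ℂ) ^ 2 := by
  split_ifs with hij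
  · subst hij
    simp [mul_conj', Complex.norm_exp_ofReal_mul_I]
  · have hexp : Continuous fun x : ℝ => exp (x * I) := by fun_prop
    have hconj : Continuous fun x : ℝ => conj (exp (x * I)) := by fun_prop
    rw [integral_pi_comp_eval_mul_comp_eval μ hij hexp.measurable hconj.measurable, integral_conj,
      mul_conj', charFun_apply_real]
    simp

theorem integral_norm_sum_exp_mul_I_sq {ι : Type*} [Fintype ι] (μ : Measure ℝ)
    [IsProbabilityMeasure μ] :
    ∫ Δ : ι → ℝ, ‖∑ m, exp (Δ m * I)‖ ^ 2 ∂Measure.pi (fun _ => μ)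
      = Fintype.card ι + ((Fintype.card ι : ℝ) ^ 2 - Fintype.card ι) * ‖charFun μ 1‖ ^ 2 := by
  classical
  have hint : ∀ i j : ι, Integrable (fun Δ : ι → ℝ => exp (Δ i * I) * conj (exp (Δ j * I)))
      (Measure.pi fun _ => μ) := by
    intro i j
    refine Integrable.of_bound (Continuous.aestronglyMeasurable (by fun_prop)) 1
      (Eventually.of_forall fun Δ => ?_)
    simp [Complex.norm_exp_ofReal_mul_I]
  apply Complex.ofReal_injective
  calc ((∫ Δ : ι → ℝ, ‖∑ m, exp (Δ m * I)‖ ^ 2 ∂Measure.pi (fun _ => μ) : ℝ) : ℂ)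
      = ∑ i, ∑ j, ∫ Δ : ι → ℝ, exp (Δ i * I) * conj (exp (Δ j * I)) ∂Measure.pi (fun _ => μ) := by
        rw [← integral_complex_ofReal]
        simp_rw [Complex.ofReal_pow, ← mul_conj', map_sum, Finset.sum_mul_sum]
        rw [integral_finsetSum _ fun i _ => integrable_finsetSum _ fun j _ => hint i j]
        exact Finset.sum_congr rfl fun i _ => integral_finsetSum _ fun j _ => hint i j
    _ = _ := by
        have hsplit : ∀ i j : ι, (if i = j then 1 else (‖charFun μ 1‖ : ℂ) ^ 2)
            = (‖charFun μ 1‖ : ℂ) ^ 2 + if i = j then 1 - (‖charFun μ 1‖ : ℂ) ^ 2 else 0 := by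
          intro i j; split_ifs <;> ring
        simp only [integral_pi_exp_mul_I_mul_conj, hsplit, Finset.sum_add_distrib,
          Finset.sum_ite_eq, Finset.mem_univ, if_true, Finset.sum_const, Finset.card_univ,
          nsmul_eq_mul]
        push_cast
        ring

noncomputable def uniformSymmIcc (δ : ℝ) : Measure ℝ :=
  (ENNReal.ofReal (2 * δ))⁻¹ • volume.restrict (Set.Icc (-δ) δ)

lemma isProbabilityMeasure_uniformSymmIcc {δ : ℝ} (hδ : 0 < δ) :
    IsProbabilityMeasure (uniformSymmIcc δ) := by
  constructor
  rw [uniformSymmIcc, Measure.smul_apply, Measure.restrict_apply MeasurableSet.univ,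
    Set.univ_inter, Real.volume_Icc, smul_eq_mul, show δ - -δ = 2 * δ by ring]
  exact ENNReal.inv_mul_cancel (ENNReal.ofReal_pos.2 (by linarith)).ne' ENNReal.ofReal_ne_top

lemma charFun_uniformSymmIcc {δ : ℝ} (hδ : 0 < δ) {t : ℝ} (ht : t ≠ 0) :
    charFun (uniformSymmIcc δ) t = (Real.sin (t * δ) / (t * δ) : ℝ) := by
  have htI : (t : ℂ) * I ≠ 0 := mul_ne_zero (ofReal_ne_zero.2 ht) I_ne_zero
  rw [charFun_apply_real, uniformSymmIcc, integral_smul_measure, integral_Icc_eq_integral_Ioc,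
    ← intervalIntegral.integral_of_le (by linarith)]
  simp_rw [mul_right_comm _ _ I]
  rw [integral_exp_mul_complex htI, ENNReal.toReal_inv, ENNReal.toReal_ofReal (by linarith),
    Complex.real_smul]
  have h := two_sin (δ * t : ℂ)
  rw [neg_mul] at h
  push_cast
  field_simp
  congr 1
  linear_combination (-I) * h + (cexp (δ * t * I) - cexp (-(δ * t * I))) * I_sq

lemma tendsto_inv_sq_mul_add_sq_sub_mul (c : ℝ) :
    Tendsto (fun M : ℕ => (1 / (M : ℝ) ^ 2) * (M + ((M : ℝ) ^ 2 - M) * c)) atTop (nhds c) := by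
  have hlim : Tendsto (fun M : ℕ => c + (1 - c) / M) atTop (nhds c) := by
    simpa using tendsto_const_nhds.add (tendsto_const_div_atTop_nhds_zero_nat (1 - c))
  refine hlim.congr' ?_
  filter_upwards [eventually_ne_atTop 0] with M hM
  field_simp
  ring

/-- Power scaling law with `b`-bit phase shifters: with `δ = π/2^b` and i.i.d. uniform
phase errors on `[-δ, δ]`, the normalized expected power `(1/M²) · E |∑ m, exp(i Δ m)|²`
tends to `((2^b/π) · sin(π/2^b))²` as `M → ∞`. -/
theorem power_scaling_law (b : ℕ) :
    Tendsto
      (fun M : ℕ =>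
        (1 / (M : ℝ) ^ 2) *
          ∫ Δ : Fin M → ℝ,
            ‖∑ m, Complex.exp ((Δ m : ℂ) * Complex.I)‖ ^ 2
          ∂(Measure.pi fun _ : Fin M =>
              (ENNReal.ofReal (2 * (π / 2 ^ b)))⁻¹ •
                volume.restrict (Set.Icc (-(π / 2 ^ b)) (π / 2 ^ b))))
      atTop (nhds ((2 ^ b / π * Real.sin (π / 2 ^ b)) ^ 2)) := by
  have hδ : 0 < π / 2 ^ b := by positivity
  have := isProbabilityMeasure_uniformSymmIcc hδ
  have hφ : ‖charFun (uniformSymmIcc (π / 2 ^ b)) 1‖ ^ 2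
      = (2 ^ b / π * Real.sin (π / 2 ^ b)) ^ 2 := by
    rw [charFun_uniformSymmIcc hδ one_ne_zero, Complex.norm_real, Real.norm_eq_abs, sq_abs,
      one_mul, div_eq_inv_mul, inv_div]
  rw [← hφ]
  refine (tendsto_inv_sq_mul_add_sq_sub_mul _).congr fun M => ?_
  rw [← uniformSymmIcc, integral_norm_sum_exp_mul_I_sq, Fintype.card_fin]
end
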